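/- arXiv:2101.12120 — 4 statements merged into one kernel-verified Lean document; each statement's English description precedes it below -/
import Mathlib

section
/- If α < ζ/λ, then the tumor-free equilibrium (0, ζ/λ) of the treatment-free system is linearly (asymptotically) stable: all eigenvalues of the Jacobian at that point have negative real part. -/
/-!
At the tumor-free equilibrium `x₁ = 0` the first equation does not depend on `x₂`, so the
Jacobian is lower triangular and its eigenvalues are its diagonal entries `α - ζ/λ` and `-λ`.
-/

theorem Matrix.IsLowerTriangular.spectrum_eq {K n : Type*} [Field K] [Fintype n] [DecidableEq n]
    [LinearOrder n] {M : Matrix n n K} (hM : M.IsLowerTriangular) :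
    spectrum K M = Set.range M.diag := by
  ext r
  rw [Matrix.mem_spectrum_iff_isRoot_charpoly, ← M.charpoly_transpose,
    Matrix.charpoly_of_isUpperTriangular M.transpose hM.transpose]
  simp [Polynomial.eval_prod, Finset.prod_eq_zero_iff, sub_eq_zero, @eq_comm _ r]

theorem Matrix.isLowerTriangular_fin_two {R : Type*} [Zero R] {M : Matrix (Fin 2) (Fin 2) R}
    (h : M 0 1 = 0) : M.IsLowerTriangular := by
  intro i j hij
  replace hij : i < j := hij
  fin_cases i <;> fin_cases j <;> simp_all

theorem hasDerivAt_logistic_sub_mul (α β c x : ℝ) :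
    HasDerivAt (fun x => α * x * (1 - β * x) - x * c) (α * (1 - 2 * β * x) - c) x := by
  have := (((hasDerivAt_id x).const_mul α).mul (((hasDerivAt_id x).const_mul β).const_sub 1)).sub
    ((hasDerivAt_id x).mul_const c)
  exact this.congr_deriv (by simp only [id]; ring)

theorem tumor_free_stable_general
    (α β ζ lam η θ : ℝ) (hlam : 0 < lam)
    (f1 f2 : ℝ → ℝ → ℝ)
    (hf1 : ∀ x1 x2, f1 x1 x2 = α * x1 * (1 - β * x1) - x1 * x2)
    (hf2 : ∀ x1 x2, f2 x1 x2 = ζ - lam * x2 + η * x1 * x2 / (θ + x1))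
    (J : Matrix (Fin 2) (Fin 2) ℝ)
    (hJ : J = Matrix.of
      ![![deriv (fun x1 => f1 x1 (ζ / lam)) 0, deriv (fun x2 => f1 0 x2) (ζ / lam)],
        ![deriv (fun x1 => f2 x1 (ζ / lam)) 0, deriv (fun x2 => f2 0 x2) (ζ / lam)]])
    (h : α < ζ / lam) :
    ∀ μ ∈ spectrum ℂ (J.map (Complex.ofReal)), μ.re < 0 := by
  have hJ00 : J 0 0 = α - ζ / lam := by
    simpa [hJ, hf1] using (hasDerivAt_logistic_sub_mul α β (ζ / lam) 0).deriv
  have hJ01 : J 0 1 = 0 := by simp [hJ, hf1]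
  have hJ11 : J 1 1 = -lam := by simp [hJ, hf2]
  have hJ_lower : (J.map Complex.ofReal).IsLowerTriangular :=
    (Matrix.isLowerTriangular_fin_two hJ01).map Complex.ofRealHom
  rw [hJ_lower.spectrum_eq]
  rintro _ ⟨i, rfl⟩
  fin_cases i <;> simp [hJ00, hJ11] <;> linarith

/-- If `α < ζ/λ` then the tumor-free equilibrium is linearly stable: all (complex)
eigenvalues of the Jacobian there have negative real part. -/
theorem tumor_free_stable
    (α β ζ lam η θ : ℝ) (hα : 0 < α) (hβ : 0 < β) (hζ : 0 < ζ)
    (hlam : 0 < lam) (hη : 0 < η) (hθ : 0 < θ)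
    (f1 f2 : ℝ → ℝ → ℝ)
    (hf1 : ∀ x1 x2, f1 x1 x2 = α * x1 * (1 - β * x1) - x1 * x2)
    (hf2 : ∀ x1 x2, f2 x1 x2 = ζ - lam * x2 + η * x1 * x2 / (θ + x1))
    (J : Matrix (Fin 2) (Fin 2) ℝ)
    (hJ : J = Matrix.of
      ![![deriv (fun x1 => f1 x1 (ζ / lam)) 0, deriv (fun x2 => f1 0 x2) (ζ / lam)],
        ![deriv (fun x1 => f2 x1 (ζ / lam)) 0, deriv (fun x2 => f2 0 x2) (ζ / lam)]])
    (h : α < ζ / lam) :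
    ∀ μ ∈ spectrum ℂ (J.map (Complex.ofReal)), μ.re < 0 :=
  tumor_free_stable_general α β ζ lam η θ hlam f1 f2 hf1 hf2 J hJ h
end

section
/- If α > ζ/λ, then the tumor-free equilibrium (0, ζ/λ) is unstable: the Jacobian at that point has an eigenvalue with positive real part. -/
/-!
At `x₁ = 0` the first equation vanishes identically in `x₂`, so the Jacobian at `(0, ζ/λ)` is
lower triangular. Its eigenvalues are therefore its diagonal entries, and the first one is the
per-capita tumor growth rate `α - ζ/λ` at that point, positive by assumption.
-/

open Polynomial

namespace Matrix

variable {n R : Type*} [Fintype n] [DecidableEq n] [LinearOrder n] [CommRing R]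

theorem IsLowerTriangular.diag_mem_spectrum [Nontrivial R] {M : Matrix n n R}
    (h : M.IsLowerTriangular) (i : n) : M i i ∈ spectrum R M := by
  have hcharpoly : M.charpoly = ∏ j : n, (X - C (M j j)) := by
    simp [charpoly, det_of_isLowerTriangular _ h.charmatrix]
  refine mem_spectrum_of_isRoot_charpoly ?_
  rw [hcharpoly, IsRoot, eval_prod]
  exact Finset.prod_eq_zero (Finset.mem_univ i) (by simp)

theorem isLowerTriangular_of_fin_two {M : Matrix (Fin 2) (Fin 2) R} (h : M 0 1 = 0) :
    M.IsLowerTriangular := by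
  intro i j hij
  rw [OrderDual.toDual_lt_toDual] at hij
  fin_cases i <;> fin_cases j <;> simp_all

end Matrix

theorem deriv_id_mul_at_zero {g : ℝ → ℝ} (hg : DifferentiableAt ℝ g 0) :
    deriv (fun x => x * g x) 0 = g 0 := by
  rw [deriv_fun_mul differentiableAt_fun_id hg]
  simp

theorem tumor_free_unstable_general
    (α β ζ lam : ℝ)
    (f1 f2 : ℝ → ℝ → ℝ)
    (hf1 : ∀ x1 x2, f1 x1 x2 = α * x1 * (1 - β * x1) - x1 * x2)
    (J : Matrix (Fin 2) (Fin 2) ℝ)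
    (hJ : J = Matrix.of
      ![![deriv (fun x1 => f1 x1 (ζ / lam)) 0, deriv (fun x2 => f1 0 x2) (ζ / lam)],
        ![deriv (fun x1 => f2 x1 (ζ / lam)) 0, deriv (fun x2 => f2 0 x2) (ζ / lam)]])
    (h : ζ / lam < α) :
    ∃ μ ∈ spectrum ℂ (J.map (Complex.ofReal)), 0 < μ.re := by
  have hJ00 : J 0 0 = α - ζ / lam := by
    have hfactor : (fun x1 => f1 x1 (ζ / lam)) = fun x => x * (α * (1 - β * x) - ζ / lam) := by
      funext x; rw [hf1]; ring
    simp only [hJ, Matrix.of_apply, Matrix.cons_val_zero, hfactor]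
    rw [deriv_id_mul_at_zero (by fun_prop)]
    ring
  have hJ01 : J 0 1 = 0 := by
    have hconst : (fun x2 => f1 0 x2) = fun _ => 0 := by
      funext x; rw [hf1]; ring
    simp [hJ, hconst]
  have hlower : (J.map Complex.ofReal).IsLowerTriangular :=
    Matrix.isLowerTriangular_of_fin_two (by simp [hJ01])
  exact ⟨_, hlower.diag_mem_spectrum 0, by simp [hJ00, h]⟩

/-- If `α > ζ/λ` then the tumor-free equilibrium is unstable: the Jacobian there has
an eigenvalue with positive real part. -/
theorem tumor_free_unstable
    (α β ζ lam η θ : ℝ) (hα : 0 < α) (hβ : 0 < β) (hζ : 0 < ζ)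
    (hlam : 0 < lam) (hη : 0 < η) (hθ : 0 < θ)
    (f1 f2 : ℝ → ℝ → ℝ)
    (hf1 : ∀ x1 x2, f1 x1 x2 = α * x1 * (1 - β * x1) - x1 * x2)
    (hf2 : ∀ x1 x2, f2 x1 x2 = ζ - lam * x2 + η * x1 * x2 / (θ + x1))
    (J : Matrix (Fin 2) (Fin 2) ℝ)
    (hJ : J = Matrix.of
      ![![deriv (fun x1 => f1 x1 (ζ / lam)) 0, deriv (fun x2 => f1 0 x2) (ζ / lam)],
        ![deriv (fun x1 => f2 x1 (ζ / lam)) 0, deriv (fun x2 => f2 0 x2) (ζ / lam)]])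
    (h : ζ / lam < α) :
    ∃ μ ∈ spectrum ℂ (J.map (Complex.ofReal)), 0 < μ.re :=
  tumor_free_unstable_general α β ζ lam f1 f2 hf1 J hJ h
end

section
/- A point (x1, x2) with x1 > 0 and θ + x1 ≠ 0 and λ - ηx1/(θ+x1) ≠ 0 is a nonzero equilibrium of the treatment-free system if and only if x1 satisfies the quadratic equation A x1² + B x1 + C = 0 with A = β(λ - η), B = ζ/α + βλθ + η - λ, C = θ(ζ/α - λ), and x2 = α(1 - βx1). -/
/-- A point `(x1, x2)` with `x1 > 0` is a nonzero equilibrium of the treatment-free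
system iff `x1` solves the quadratic `A x1² + B x1 + C = 0` and `x2 = α(1-βx1)`. -/
theorem nonzero_equilibria_quadratic
    (α β ζ lam η θ : ℝ) (hα : 0 < α) (hβ : 0 < β) (hζ : 0 < ζ)
    (hlam : 0 < lam) (hη : 0 < η) (hθ : 0 < θ)
    (A B C : ℝ)
    (hA : A = β * (lam - η)) (hB : B = ζ / α + β * lam * θ + η - lam)
    (hC : C = θ * (ζ / α - lam)) :
    ∀ x1 x2 : ℝ, 0 < x1 → θ + x1 ≠ 0 → lam - η * x1 / (θ + x1) ≠ 0 →
      ((α * x1 * (1 - β * x1) - x1 * x2 = 0 ∧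
        ζ - lam * x2 + η * x1 * x2 / (θ + x1) = 0) ↔
       (A * x1 ^ 2 + B * x1 + C = 0 ∧ x2 = α * (1 - β * x1))) := by
  intro x1 x2 hx1 hθx hden
  have hx1' : x1 ≠ 0 := ne_of_gt hx1
  have hα' : α ≠ 0 := ne_of_gt hα
  subst hA hB hC
  constructor
  · rintro ⟨h1, h2⟩
    have hx2 : x2 = α * (1 - β * x1) := by
      have h : x1 * (α * (1 - β * x1) - x2) = 0 := by linear_combination h1
      rcases mul_eq_zero.mp h with h' | h'
      · exact absurd h' hx1'
      · linarith
    subst hx2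
    refine ⟨?_, rfl⟩
    field_simp at h2 ⊢
    linear_combination h2
  · rintro ⟨hq, hx2⟩
    subst hx2
    refine ⟨by ring, ?_⟩
    field_simp at hq ⊢
    linear_combination hq
end

section
/- With the Dulac function φ(x1, x2) = 1/(x1 x2), for all x1 > 0 and x2 > 0, ∂/∂x1 (φ·f1) + ∂/∂x2 (φ·f2) = -(αβ/x2 + ζ/(x1 x2²)), which is strictly negative. -/
/-! The Dulac factor `1/(x1 x2)` cancels the `x1` in `f1` and turns `f2` into `ζ/(x1 x2)` plus a
term constant in `x2`, so both partial derivatives are elementary; each resulting term is negative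
on the positive quadrant. -/

theorem hasDerivAt_one_div_mul_const_mul_self_mul_affine (a b c : ℝ) {y : ℝ} (hy : y ≠ 0) :
    HasDerivAt (fun t => 1 / (t * c) * (t * (a + b * t))) (b / c) y := by
  have hloc : (fun t => (a + b * t) / c) =ᶠ[nhds y] fun t => 1 / (t * c) * (t * (a + b * t)) := by
    filter_upwards [eventually_ne_nhds hy] with t ht
    rw [one_div, mul_inv, div_eq_mul_inv]
    field_simp
  have hlin : HasDerivAt (fun t => (a + b * t) / c) (b / c) y := by
    simpa using (((hasDerivAt_id y).const_mul b).const_add a).div_const c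
  exact hlin.congr_of_eventuallyEq hloc.symm

theorem hasDerivAt_one_div_const_mul_mul_affine (a b c : ℝ) {y : ℝ} (hy : y ≠ 0) :
    HasDerivAt (fun t => 1 / (c * t) * (a + b * t)) (-(a / (c * y ^ 2))) y := by
  have hloc : (fun t => a / c * t⁻¹ + b / c) =ᶠ[nhds y] fun t => 1 / (c * t) * (a + b * t) := by
    filter_upwards [eventually_ne_nhds hy] with t ht
    rw [one_div, mul_inv]
    field_simp
  have hhyp : HasDerivAt (fun t => a / c * t⁻¹ + b / c) (-(a / (c * y ^ 2))) y := by
    refine (((hasDerivAt_inv hy).const_mul (a / c)).add_const (b / c)).congr_deriv ?_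
    rw [mul_neg, ← div_eq_mul_inv, div_div]
  exact hhyp.congr_of_eventuallyEq hloc.symm

theorem dulac_criterion_general
    (α β ζ lam η θ : ℝ) (hα : 0 < α) (hβ : 0 < β) (hζ : 0 < ζ)
    (f1 f2 φ : ℝ → ℝ → ℝ)
    (hf1 : ∀ x1 x2, f1 x1 x2 = α * x1 * (1 - β * x1) - x1 * x2)
    (hf2 : ∀ x1 x2, f2 x1 x2 = ζ - lam * x2 + η * x1 * x2 / (θ + x1))
    (hφ : ∀ x1 x2, φ x1 x2 = 1 / (x1 * x2)) :
    ∀ x1 x2 : ℝ, 0 < x1 → 0 < x2 →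
      deriv (fun y1 => φ y1 x2 * f1 y1 x2) x1 +
        deriv (fun y2 => φ x1 y2 * f2 x1 y2) x2 =
        -(α * β / x2 + ζ / (x1 * x2 ^ 2)) ∧
      -(α * β / x2 + ζ / (x1 * x2 ^ 2)) < 0 := by
  intro x1 x2 hx1 hx2
  have hφf1 : (fun y1 => φ y1 x2 * f1 y1 x2) =
      fun y1 => 1 / (y1 * x2) * (y1 * ((α - x2) + -(α * β) * y1)) := by
    funext y1
    rw [hφ, hf1]
    ring
  have hφf2 : (fun y2 => φ x1 y2 * f2 x1 y2) =
      fun y2 => 1 / (x1 * y2) * (ζ + (η * x1 / (θ + x1) - lam) * y2) := by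
    funext y2
    rw [hφ, hf2]
    ring
  refine ⟨?_, neg_neg_of_pos (by positivity)⟩
  rw [hφf1, hφf2, (hasDerivAt_one_div_mul_const_mul_self_mul_affine _ _ _ hx1.ne').deriv,
    (hasDerivAt_one_div_const_mul_mul_affine _ _ _ hx2.ne').deriv]
  ring

/-- Dulac–Bendixson computation with `φ(x1,x2) = 1/(x1 x2)` on the positive quadrant:
the divergence of `(φ f1, φ f2)` equals `-(αβ/x2 + ζ/(x1 x2²)) < 0`. -/
theorem dulac_criterion
    (α β ζ lam η θ : ℝ) (hα : 0 < α) (hβ : 0 < β) (hζ : 0 < ζ)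
    (hlam : 0 < lam) (hη : 0 < η) (hθ : 0 < θ)
    (f1 f2 φ : ℝ → ℝ → ℝ)
    (hf1 : ∀ x1 x2, f1 x1 x2 = α * x1 * (1 - β * x1) - x1 * x2)
    (hf2 : ∀ x1 x2, f2 x1 x2 = ζ - lam * x2 + η * x1 * x2 / (θ + x1))
    (hφ : ∀ x1 x2, φ x1 x2 = 1 / (x1 * x2)) :
    ∀ x1 x2 : ℝ, 0 < x1 → 0 < x2 →
      deriv (fun y1 => φ y1 x2 * f1 y1 x2) x1 +
        deriv (fun y2 => φ x1 y2 * f2 x1 y2) x2 =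
        -(α * β / x2 + ζ / (x1 * x2 ^ 2)) ∧
      -(α * β / x2 + ζ / (x1 * x2 ^ 2)) < 0 :=
  dulac_criterion_general α β ζ lam η θ hα hβ hζ f1 f2 φ hf1 hf2 hφ
end
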